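/- Every X-AR word s is ω-power free: for every nonempty factor u of s there exists an integer p > 0 such that u^p is not a factor of s. -/

import Mathlib

open List

/-- Right palindromic closure: `w⁺ = u Q u~` where `Q` is the longest palindromic
suffix of `w = uQ`; equivalently the shortest palindrome having `w` as a prefix. -/
noncomputable def palClosure {A : Type*} (w : List A) : List A :=
  letI : DecidablePred fun k => (w.drop k).reverse = w.drop k :=
    fun _ => Classical.propDecidable _
  w ++ (w.take (Nat.find (⟨w.length, by simp⟩ :
    ∃ k, (w.drop k).reverse = w.drop k))).reverse

/-- The palindromization map `ψ_X` relative to a code `X`, evaluated on the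
(unique) `X`-factorization `l = [x₁, …, xₙ]` of a word of `X*`. -/
noncomputable def psiList {A : Type*} (l : List (List A)) : List A :=
  l.foldl (fun p x => palClosure (p ++ x)) []

/-- The (usual) palindromization map `ψ` on words, letter by letter. -/
noncomputable def psiWord {A : Type*} (w : List A) : List A :=
  w.foldl (fun p a => palClosure (p ++ [a])) []

/-- `X` is a code: nonempty words with unique factorization over `X`. -/
def IsCode {A : Type*} (X : Set (List A)) : Prop :=
  (∀ x ∈ X, x ≠ []) ∧
  ∀ l l' : List (List A), (∀ w ∈ l, w ∈ X) → (∀ w ∈ l', w ∈ X) →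
    l.flatten = l'.flatten → l = l'

/-- `X` is a prefix code: nonempty words, none a proper prefix of another. -/
def IsPrefixCode {A : Type*} (X : Set (List A)) : Prop :=
  (∀ x ∈ X, x ≠ []) ∧ ∀ x ∈ X, ∀ y ∈ X, x <+: y → x = y

/-- `X` is a maximal prefix code over `A`. -/
def IsMaximalPrefixCode {A : Type*} (X : Set (List A)) : Prop :=
  IsPrefixCode X ∧ ∀ Y : Set (List A), IsPrefixCode Y → X ⊆ Y → X = Y

/-- `w ∈ X*`. -/
def InStar {A : Type*} (X : Set (List A)) (w : List A) : Prop :=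
  ∃ l : List (List A), (∀ u ∈ l, u ∈ X) ∧ l.flatten = w

/-- The finite word `w` is a prefix of the infinite word `s`. -/
def PrefixOfInf {A : Type*} (w : List A) (s : ℕ → A) : Prop :=
  ∀ i : ℕ, ∀ h : i < w.length, w.get ⟨i, h⟩ = s i

/-- The finite word `w` is a factor of the infinite word `s`. -/
def FactorOfInf {A : Type*} (w : List A) (s : ℕ → A) : Prop :=
  ∃ i : ℕ, w = List.ofFn fun k : Fin w.length => s (i + k.1)

/-- `X` has finite deciphering delay. -/
def FiniteDecipheringDelay {A : Type*} (X : Set (List A)) : Prop :=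
  ∃ k : ℕ, ∀ x ∈ X, ∀ x' ∈ X,
    (∃ (l l' : List (List A)) (r : List A),
      (∀ w ∈ l, w ∈ X) ∧ l.length = k ∧ (∀ w ∈ l', w ∈ X) ∧
      x ++ l.flatten ++ r = x' ++ l'.flatten) → x = x'

/-- The sequence `y = y₁y₂⋯ ∈ X^ω` is alternating. -/
def Alternating {A : Type*} (y : ℕ → List A) : Prop :=
  ∃ a b : A, a ≠ b ∧ ∃ (lam : List A) (idx : ℕ → ℕ), StrictMono idx ∧
    ∀ k : ℕ, (lam ++ [a]) <+: y (idx (2 * k)) ∧ (lam ++ [b]) <+: y (idx (2 * k + 1))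

/-- The infinite word `s` is ultimately periodic. -/
def UltimatelyPeriodic {A : Type*} (s : ℕ → A) : Prop :=
  ∃ p : ℕ, 0 < p ∧ ∃ N : ℕ, ∀ n ≥ N, s (n + p) = s n

/-- The infinite word `s` is uniformly recurrent: every factor occurs in every
sufficiently long factor of `s`. -/
def UniformlyRecurrent {A : Type*} (s : ℕ → A) : Prop :=
  ∀ w : List A, FactorOfInf w s →
    ∃ N : ℕ, ∀ i : ℕ, w <:+: List.ofFn fun k : Fin N => s (i + k.1)

/-- Factor complexity of the infinite word `s`. -/
noncomputable def complexity {A : Type*} (s : ℕ → A) (n : ℕ) : ℕ :=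
  {u : List A | u.length = n ∧ FactorOfInf u s}.ncard

/-- A word `w` is primitive if it is not a proper power. -/
def Primitive {A : Type*} (w : List A) : Prop :=
  ∀ (v : List A) (n : ℕ), 1 < n → w ≠ (List.replicate n v).flatten

/-!
Let `Pₙ = ψ_X(y₀ ⋯ yₙ₋₁)`, the palindromic prefixes of `s`. Since `|Pₙ₊₁| ≤ 2 |Pₙ| + 2 max |x|`,
reflecting occurrences of `Pₖ` through the palindromes `Pⱼ`, `j ≥ k`, shows that `Pₖ` occurs in
every window of length `O(|Pₖ|)` of `s`. If every power of `u` were a factor of `s`, each `Pₖ`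
would lie inside a power of `u`, so `s` would have period `|u|`. In a periodic word the letters
after a palindromic prefix at least as long as the period do not depend on that prefix, and every
`x ∈ X` is read right after arbitrarily long `Pₙ`; so all words of `X` are prefixes of one
infinite word, and the prefix code `X` is a singleton, which a maximal prefix code over at least
two letters cannot be.
-/

section PalClosure

variable {A : Type*}

theorem palClosure_spec (w : List A) :
    ∃ k ≤ w.length, (w.drop k).reverse = w.drop k ∧
      palClosure w = w ++ (w.take k).reverse := by
  classical
  have hex : ∃ k, (w.drop k).reverse = w.drop k := ⟨w.length, by simp⟩
  refine ⟨Nat.find hex, Nat.find_le (by simp), Nat.find_spec hex, ?_⟩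
  unfold palClosure
  congr

theorem prefix_palClosure (w : List A) : w <+: palClosure w := by
  obtain ⟨k, -, -, heq⟩ := palClosure_spec w
  exact heq ▸ prefix_append _ _

theorem reverse_palClosure (w : List A) : (palClosure w).reverse = palClosure w := by
  obtain ⟨k, -, hpal, heq⟩ := palClosure_spec w
  have hrev : w.reverse = w.drop k ++ (w.take k).reverse := by
    conv_lhs => rw [← take_append_drop k w]
    rw [reverse_append, hpal]
  rw [heq, reverse_append, reverse_reverse, hrev, ← append_assoc, take_append_drop]

theorem length_palClosure_le (w : List A) : (palClosure w).length ≤ 2 * w.length := by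
  obtain ⟨k, hk, -, heq⟩ := palClosure_spec w
  simp only [heq, length_append, length_reverse, length_take]
  omega

end PalClosure

section PsiPrefix

variable {A : Type*} (y : ℕ → List A)

noncomputable def psiPrefix (n : ℕ) : List A :=
  psiList (List.ofFn fun i : Fin n => y i.1)

theorem psiPrefix_succ (n : ℕ) :
    psiPrefix y (n + 1) = palClosure (psiPrefix y n ++ y n) := by
  rw [psiPrefix, psiPrefix, List.ofFn_succ', concat_eq_append, psiList, psiList, foldl_append]
  rfl

theorem reverse_psiPrefix (n : ℕ) : (psiPrefix y n).reverse = psiPrefix y n := by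
  cases n with
  | zero => rfl
  | succ n => rw [psiPrefix_succ, reverse_palClosure]

theorem append_prefix_psiPrefix_succ (n : ℕ) : psiPrefix y n ++ y n <+: psiPrefix y (n + 1) :=
  psiPrefix_succ y n ▸ prefix_palClosure _

theorem length_psiPrefix_succ_le (n : ℕ) :
    (psiPrefix y (n + 1)).length ≤ 2 * ((psiPrefix y n).length + (y n).length) := by
  simpa [psiPrefix_succ] using length_palClosure_le (psiPrefix y n ++ y n)

theorem strictMono_length_psiPrefix {y : ℕ → List A} (hy : ∀ n, y n ≠ []) :
    StrictMono fun n => (psiPrefix y n).length :=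
  strictMono_nat_of_lt_succ fun n => by
    have := (append_prefix_psiPrefix_succ y n).length_le
    have := length_pos_iff.mpr (hy n)
    simp only [length_append] at *
    omega

end PsiPrefix

section InfiniteWord

variable {A : Type*} {s : ℕ → A}

def IsPalindromicPrefix (s : ℕ → A) (L : ℕ) : Prop :=
  ∀ i < L, s i = s (L - 1 - i)

def PrefixOccursAt (s : ℕ → A) (L o : ℕ) : Prop :=
  ∀ i < L, s (o + i) = s i

theorem PrefixOfInf.of_prefix {w w' : List A} (h : PrefixOfInf w' s) (hw : w <+: w') :
    PrefixOfInf w s :=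
  fun i hi => (hw.getElem hi).trans (h i _)

theorem PrefixOfInf.shift_of_append {v x : List A} (h : PrefixOfInf (v ++ x) s) :
    PrefixOfInf x fun t => s (v.length + t) := fun t ht => by
  simpa [getElem_append_right] using h (v.length + t) (by simp; omega)

theorem PrefixOfInf.isPalindromicPrefix {w : List A} (h : PrefixOfInf w s)
    (hw : w.reverse = w) : IsPalindromicPrefix s w.length := fun i hi =>
  calc s i = w[i] := (h i hi).symm
    _ = w.reverse[i]'(by simpa) := getElem_of_eq hw.symm _
    _ = w[w.length - 1 - i] := getElem_reverse _
    _ = s (w.length - 1 - i) := h _ _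

theorem PrefixOfInf.prefix_of_length_le {w w' : List A} (h : PrefixOfInf w s)
    (h' : PrefixOfInf w' s) (hle : w.length ≤ w'.length) : w <+: w' := by
  rw [prefix_iff_eq_take]
  refine ext_getElem (by simpa using hle) fun i hi _ => ?_
  rw [getElem_take]
  exact (h i hi).trans (h' i (by omega)).symm

theorem prefixOccursAt_zero (L : ℕ) : PrefixOccursAt s L 0 := fun i _ => by rw [zero_add]

theorem PrefixOccursAt.mirror {L M o : ℕ} (hL : IsPalindromicPrefix s L)
    (hM : IsPalindromicPrefix s M) (ho : o + L ≤ M) (h : PrefixOccursAt s L o) :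
    PrefixOccursAt s L (M - o - L) := fun i hi =>
  calc s (M - o - L + i) = s (M - 1 - (M - o - L + i)) := hM _ (by omega)
    _ = s (o + (L - 1 - i)) := by congr 1; omega
    _ = s (L - 1 - i) := h _ (by omega)
    _ = s i := (hL i hi).symm

theorem exists_prefixOccursAt_near {L : ℕ → ℕ} {D : ℕ}
    (hpal : ∀ n, IsPalindromicPrefix s (L n)) (hmono : Monotone L)
    (hgrow : ∀ n, L (n + 1) ≤ 2 * L n + D) {k j : ℕ} (hkj : k ≤ j) :
    ∀ t, t + L k ≤ L j → ∃ o, o + L k ≤ L j ∧ PrefixOccursAt s (L k) o ∧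
      o ≤ t + (L k + D) ∧ t ≤ o + (L k + D) := by
  induction j, hkj using Nat.le_induction with
  | base => exact fun t ht => ⟨0, by omega, prefixOccursAt_zero _, by omega, by omega⟩
  | succ j hkj ih =>
    intro t ht
    have hkj' : L k ≤ L j := hmono hkj
    have hjj : L j ≤ L (j + 1) := hmono j.le_succ
    have hgj := hgrow j
    by_cases h₁ : t + L k ≤ L j
    · obtain ⟨o, ho, hocc, h₂, h₃⟩ := ih t h₁
      exact ⟨o, by omega, hocc, h₂, h₃⟩
    by_cases h₂ : t ≤ L j + D
    · exact ⟨L j - 0 - L k, by omega,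
        (prefixOccursAt_zero _).mirror (hpal k) (hpal j) (by omega), by omega, by omega⟩
    -- `t > L j + D ≥ L (j + 1) - L j`: the mirror image of `t` in `L (j + 1)` falls inside `L j`
    · obtain ⟨o, ho, hocc, h₃, h₄⟩ := ih (L (j + 1) - t - L k) (by omega)
      exact ⟨L (j + 1) - o - L k, by omega, hocc.mirror (hpal k) (hpal (j + 1)) (by omega),
        by omega, by omega⟩

theorem exists_prefixOccursAt_window {L : ℕ → ℕ} {D : ℕ}
    (hpal : ∀ n, IsPalindromicPrefix s (L n)) (hL : StrictMono L)
    (hgrow : ∀ n, L (n + 1) ≤ 2 * L n + D) (k t : ℕ) :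
    ∃ o, PrefixOccursAt s (L k) o ∧ t ≤ o ∧ o ≤ t + 2 * (L k + D) := by
  set j := k + t + 2 * (L k + D)
  have hj : j ≤ L j := hL.id_le j
  obtain ⟨o, -, hocc, h₁, h₂⟩ := exists_prefixOccursAt_near hpal hL.monotone hgrow
    (by omega : k ≤ j) (t + (L k + D)) (by omega)
  exact ⟨o, hocc, by omega, by omega⟩

theorem periodic_of_forall_exists_periodic_window {L : ℕ → ℕ} {D m : ℕ}
    (hpal : ∀ n, IsPalindromicPrefix s (L n)) (hL : StrictMono L)
    (hgrow : ∀ n, L (n + 1) ≤ 2 * L n + D)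
    (hwin : ∀ N, ∃ i, ∀ n, n + m < N → s (i + n + m) = s (i + n)) :
    Function.Periodic s m := by
  intro a
  set k := a + m + 1
  have hk : a + m < L k := by have := hL.id_le k; simp only [id] at this; omega
  obtain ⟨i, hi⟩ := hwin (2 * (L k + D) + L k)
  obtain ⟨o, hocc, hio, hoi⟩ := exists_prefixOccursAt_window hpal hL hgrow k i
  obtain ⟨c, rfl⟩ : ∃ c, o = i + c := ⟨o - i, by omega⟩
  calc s (a + m) = s (i + c + (a + m)) := (hocc _ hk).symm
    _ = s (i + (c + a) + m) := by ring_nf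
    _ = s (i + (c + a)) := hi _ (by omega)
    _ = s (i + c + a) := by ring_nf
    _ = s a := hocc _ (by omega)

theorem Function.Periodic.apply_add_of_isPalindromicPrefix {m L : ℕ}
    (hper : Function.Periodic s m) (hm : 0 < m) (hmL : m ≤ L)
    (hpal : IsPalindromicPrefix s L) {c t : ℕ} (hc : L + t ≤ c * m) :
    s (L + t) = s (c * m - 1 - t) := by
  set r := (L + t) % m
  have hr : r < m := Nat.mod_lt _ hm
  have hdiv : m * ((L + t) / m) + r = L + t := Nat.div_add_mod _ _
  set q := (L + t) / m
  have hqc : q ≤ c := Nat.le_of_mul_le_mul_left (by rw [mul_comm m c]; omega) hm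
  obtain ⟨d, rfl⟩ : ∃ d, c = q + d := ⟨c - q, by omega⟩
  calc s (L + t) = s r := (hper.map_mod_nat _).symm
    _ = s (L - 1 - r) := hpal r (by omega)
    _ = s (L - 1 - r + d * m) := by simpa using (hper.nat_mul d (L - 1 - r)).symm
    _ = s ((q + d) * m - 1 - t) := by congr 1; rw [add_mul, mul_comm q m]; omega

theorem Function.Periodic.apply_add_eq_of_isPalindromicPrefix {m L L' : ℕ}
    (hper : Function.Periodic s m) (hm : 0 < m) (hmL : m ≤ L) (hmL' : m ≤ L')
    (hpal : IsPalindromicPrefix s L) (hpal' : IsPalindromicPrefix s L') (t : ℕ) :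
    s (L + t) = s (L' + t) := by
  have hc : L + L' + t ≤ (L + L' + t) * m := Nat.le_mul_of_pos_right _ hm
  rw [hper.apply_add_of_isPalindromicPrefix hm hmL hpal (c := L + L' + t) (by omega),
    hper.apply_add_of_isPalindromicPrefix hm hmL' hpal' (c := L + L' + t) (by omega)]

theorem getElem?_flatten_replicate_add_length (u : List A) {p n : ℕ}
    (hn : n + u.length < p * u.length) :
    (replicate p u).flatten[n + u.length]? = (replicate p u).flatten[n]? := by
  obtain _ | p := p
  · simp at hn
  have hleft : (replicate (p + 1) u).flatten = u ++ (replicate p u).flatten := by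
    simp [replicate_succ]
  have hright : (replicate (p + 1) u).flatten = (replicate p u).flatten ++ u := by
    simp [replicate_succ']
  rw [hleft, getElem?_append_right (by omega), Nat.add_sub_cancel, ← hleft, hright,
    getElem?_append_left (by simp; nlinarith)]

theorem FactorOfInf.exists_periodic_window {u : List A} {p : ℕ}
    (h : FactorOfInf (replicate p u).flatten s) :
    ∃ i, ∀ n, n + u.length < p * u.length → s (i + n + u.length) = s (i + n) := by
  obtain ⟨i, hi⟩ := h
  refine ⟨i, fun n hn => ?_⟩
  have key := getElem?_flatten_replicate_add_length u hn
  rw [hi] at key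
  simpa [List.getElem?_ofFn, add_assoc, hn, show n < p * u.length by omega] using key

end InfiniteWord

section PrefixCode

variable {A : Type*} {s : ℕ → A}

theorem IsPrefixCode.eq_of_prefixOfInf {X : Set (List A)} (hX : IsPrefixCode X)
    {x x' : List A} (hx : x ∈ X) (hx' : x' ∈ X) (h : PrefixOfInf x s) (h' : PrefixOfInf x' s) :
    x = x' := by
  rcases le_total x.length x'.length with hle | hle
  · exact hX.2 x hx x' hx' (h.prefix_of_length_le h' hle)
  · exact (hX.2 x' hx' x hx (h'.prefix_of_length_le h hle)).symm

theorem IsMaximalPrefixCode.exists_ne [Fintype A] (hd : 1 < Fintype.card A)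
    {X : Set (List A)} (hX : IsMaximalPrefixCode X) {x : List A} (hx : x ∈ X) :
    ∃ x' ∈ X, x' ≠ x := by
  by_contra! hsingle
  obtain ⟨c, w, rfl⟩ := exists_cons_of_ne_nil (hX.1.1 x hx)
  obtain ⟨e, he⟩ := Fintype.exists_ne_of_one_lt_card hd c
  have hY : IsPrefixCode (insert [e] X) := by
    refine ⟨?_, ?_⟩
    · rintro z (rfl | hz)
      · simp
      · exact hX.1.1 z hz
    · rintro a (rfl | ha) b (rfl | hb) hab
      · rfl
      · rw [hsingle b hb] at hab
        simp [he] at hab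
      · rw [hsingle a ha] at hab
        simp [he.symm] at hab
      · exact hX.1.2 a ha b hb hab
  have heX : [e] ∈ X := (hX.2 _ hY (Set.subset_insert _ _)).symm ▸ Set.mem_insert _ _
  simpa [he] using hsingle _ heX

end PrefixCode

/-- Every `X`-AR word is `ω`-power free. -/
theorem stmt9 {A : Type*} [Fintype A] (hd : 1 < Fintype.card A)
    (X : Set (List A)) (hfin : X.Finite) (hX : IsMaximalPrefixCode X)
    (y : ℕ → List A) (hy : ∀ i, y i ∈ X)
    (hpers : ∀ x ∈ X, ∀ N : ℕ, ∃ i ≥ N, y i = x)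
    (s : ℕ → A)
    (hs : ∀ n : ℕ, PrefixOfInf (psiList (List.ofFn fun i : Fin n => y i.1)) s) :
    ∀ u : List A, u ≠ [] → FactorOfInf u s →
      ∃ p : ℕ, 0 < p ∧ ¬ FactorOfInf (List.flatten (List.replicate p u)) s := by
  intro u hu _
  by_contra! hpow
  have hm : 0 < u.length := length_pos_iff.mpr hu
  obtain ⟨C, hC⟩ := (hfin.image length).bddAbove
  set L := fun n => (psiPrefix y n).length
  have hL : StrictMono L := strictMono_length_psiPrefix fun n => hX.1.1 _ (hy n)
  have hpal : ∀ n, IsPalindromicPrefix s (L n) :=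
    fun n => (hs n).isPalindromicPrefix (reverse_psiPrefix y n)
  have hgrow : ∀ n, L (n + 1) ≤ 2 * L n + 2 * C := fun n => by
    simp only [L]
    have := hC (Set.mem_image_of_mem _ (hy n))
    have := length_psiPrefix_succ_le y n
    omega
  have hper : Function.Periodic s u.length :=
    periodic_of_forall_exists_periodic_window hpal hL hgrow fun N =>
      ((hpow (N + 1) N.succ_pos).exists_periodic_window).imp fun _ hi n hn =>
        hi n (by nlinarith)
  have hfollow : ∀ x ∈ X, ∃ n, u.length ≤ L n ∧ PrefixOfInf x fun t => s (L n + t) := by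
    intro x hx
    obtain ⟨n, hn, rfl⟩ := hpers x hx u.length
    exact ⟨n, hn.trans (hL.id_le n),
      ((hs (n + 1)).of_prefix (append_prefix_psiPrefix_succ y n)).shift_of_append⟩
  obtain ⟨x, hx, hne⟩ := hX.exists_ne hd (hy 0)
  obtain ⟨n, hn, hxn⟩ := hfollow x hx
  obtain ⟨n', hn', hyn'⟩ := hfollow (y 0) (hy 0)
  refine hne (hX.1.eq_of_prefixOfInf hx (hy 0) hxn ?_)
  simpa only [hper.apply_add_eq_of_isPalindromicPrefix hm hn' hn (hpal n') (hpal n)] using hyn'
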